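/- Let X be an N-dimensional random variable with positive Rényi information dimension d(X), let g be measurable and Y = g(X). If the conditional information dimension d(X|Y=y) exists and is finite for P_Y-almost every y, then the relative information loss exists and equals l(X→Y) = d(X|Y) / d(X), where d(X|Y) = ∫_𝒴 d(X|Y=y) dP_Y(y). -/

import Mathlib

open MeasureTheory ProbabilityTheory Filter Set
open scoped ENNReal Topology

noncomputable section

/-- Base-2 entropy of the discrete (atomic) part of a measure. -/
def pmfEntropy {β : Type*} [MeasurableSpace β] (ν : Measure β) : ℝ≥0∞ :=
  ∑' b : β, ENNReal.ofReal (-((ν {b}).toReal * Real.logb 2 (ν {b}).toReal))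

/-- Conditional entropy `H(X | Y)` (of a discretely supported `X`) given `Y`,
computed through the regular conditional distribution of `X` given `Y`. -/
def condEnt {α β γ : Type*} [MeasurableSpace α] [MeasurableSpace β] [StandardBorelSpace β]
    [Nonempty β] [MeasurableSpace γ] (μ : Measure α) [IsFiniteMeasure μ]
    (X : α → β) (Y : α → γ) : ℝ≥0∞ :=
  ∫⁻ y, pmfEntropy (condDistrib X Y μ y) ∂(μ.map Y)

/-- Componentwise uniform quantization `X̂ₙ = ⌊2ⁿ X⌋ / 2ⁿ`. -/
def quant {ι : Type*} (n : ℕ) (x : ι → ℝ) : ι → ℝ :=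
  fun i => (⌊(2 : ℝ) ^ n * x i⌋ : ℝ) / (2 : ℝ) ^ n

/-- `H(X̂ₙ)`, entropy of the quantized input. -/
def entQ {α ι : Type*} [MeasurableSpace α] [Fintype ι] (μ : Measure α)
    (X : α → ι → ℝ) (n : ℕ) : ℝ≥0∞ :=
  pmfEntropy (μ.map fun a => quant n (X a))

/-- `H(X̂ₙ | Y)`. -/
def condEntQ {α ι γ : Type*} [MeasurableSpace α] [Fintype ι] [MeasurableSpace γ]
    (μ : Measure α) [IsFiniteMeasure μ] (X : α → ι → ℝ) (Y : α → γ) (n : ℕ) : ℝ≥0∞ :=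
  condEnt μ (fun a => quant n (X a)) Y

/-- Information loss `L(X→Y) = H(X|Y) = limₙ H(X̂ₙ|Y)`; since the sequence
`H(X̂ₙ|Y)` is nondecreasing in `n` the limit equals the supremum. -/
def infoLoss {α ι γ : Type*} [MeasurableSpace α] [Fintype ι] [MeasurableSpace γ]
    (μ : Measure α) [IsFiniteMeasure μ] (X : α → ι → ℝ) (Y : α → γ) : ℝ≥0∞ :=
  ⨆ n : ℕ, condEntQ μ X Y n

/-- The sequence `H(X̂ₙ|Y)/H(X̂ₙ)` whose limit is the relative information loss. -/
def relLossSeq {α ι γ : Type*} [MeasurableSpace α] [Fintype ι] [MeasurableSpace γ]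
    (μ : Measure α) [IsFiniteMeasure μ] (X : α → ι → ℝ) (Y : α → γ) (n : ℕ) : ℝ :=
  (condEntQ μ X Y n).toReal / (entQ μ X n).toReal

/-- The sequence `I(X̂ₙ;Y)/H(X̂ₙ) = (H(X̂ₙ) - H(X̂ₙ|Y))/H(X̂ₙ)` whose limit is the
relative information transfer. -/
def relTransSeq {α ι γ : Type*} [MeasurableSpace α] [Fintype ι] [MeasurableSpace γ]
    (μ : Measure α) [IsFiniteMeasure μ] (X : α → ι → ℝ) (Y : α → γ) (n : ℕ) : ℝ :=
  ((entQ μ X n).toReal - (condEntQ μ X Y n).toReal) / (entQ μ X n).toReal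

/-- `H(ν̂ₙ)` for a measure on `ℝᴺ` (quantized entropy of a distribution). -/
def entQM {ι : Type*} [Fintype ι] (ν : Measure (ι → ℝ)) (n : ℕ) : ℝ≥0∞ :=
  pmfEntropy (ν.map (quant n))

/-! Disintegrating along `Y`, `H(X̂ₙ | Y) = ∫ H(X̂ₙ | Y = y) dP_Y(y)`, where the inner terms are
the quantized entropies of the conditional laws `P_{X|Y=y}`; divided by `n` they tend to
`d(X | Y = y)`. To exchange limit and integral, note that refining the quantization from level `n₀`
to level `n` splits every cell into `2^((n - n₀) N)` subcells and so adds at most `(n - n₀) N` bits.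
Hence `H(X̂ₙ | Y = y) / n ≤ H(X̂_{n₀} | Y = y) + N`, which is integrable because
`∫ H(X̂_{n₀} | Y = y) = H(X̂_{n₀} | Y) ≤ H(X̂_{n₀}) < ∞` for large `n₀` (conditioning reduces
entropy, and `H(X̂ₙ)/n → d(X) > 0`). Dominated convergence gives `H(X̂ₙ | Y)/n → d(X | Y)`, and
dividing by `H(X̂ₙ)/n → d(X)` gives the claim. -/

def entropyTerm (p : ℝ≥0∞) : ℝ≥0∞ := ENNReal.ofReal (Real.negMulLog p.toReal / Real.log 2)

lemma pmfEntropy_eq_tsum_entropyTerm {β : Type*} [MeasurableSpace β] (ν : Measure β) :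
    pmfEntropy ν = ∑' b, entropyTerm (ν {b}) := by
  simp only [pmfEntropy, entropyTerm, Real.logb, Real.negMulLog]
  congr! 2
  ring_nf

lemma entropyTerm_zero : entropyTerm 0 = 0 := by simp [entropyTerm]

lemma Measurable.entropyTerm {γ : Type*} [MeasurableSpace γ] {q : γ → ℝ≥0∞}
    (hq : Measurable q) : Measurable fun y => entropyTerm (q y) :=
  ((Real.continuous_negMulLog.measurable.comp hq.ennreal_toReal).div_const _).ennreal_ofReal

lemma pmfEntropy_eq_tsum_subtype {β : Type*} [MeasurableSpace β] {ν : Measure β} {S : Set β}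
    (hS : ν Sᶜ = 0) : pmfEntropy ν = ∑' b : S, entropyTerm (ν {(b : β)}) := by
  rw [pmfEntropy_eq_tsum_entropyTerm]
  refine (tsum_subtype_eq_of_support_subset fun b hb => ?_).symm
  by_contra hbS
  refine hb ?_
  show entropyTerm (ν {b}) = 0
  rw [measure_mono_null (singleton_subset_iff.2 hbS) hS, entropyTerm_zero]

lemma Real.sum_negMulLog_le {ι : Type*} (s : Finset ι) {p : ι → ℝ} (hp : ∀ i ∈ s, 0 ≤ p i)
    {K : ℕ} (hK : s.card ≤ K) :
    ∑ i ∈ s, negMulLog (p i) ≤ negMulLog (∑ i ∈ s, p i) + (∑ i ∈ s, p i) * log K := by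
  rcases s.eq_empty_or_nonempty with rfl | hne
  · simp
  set k : ℝ := (s.card : ℝ)
  set P := ∑ i ∈ s, p i
  have hk : 0 < k := by simpa [k] using hne.card_pos
  have hjensen : ∑ i ∈ s, k⁻¹ • negMulLog (p i) ≤ negMulLog (∑ i ∈ s, k⁻¹ • p i) :=
    concaveOn_negMulLog.le_map_sum (fun _ _ => by positivity) (by simp [k, hk.ne']) hp
  have hηk : negMulLog k⁻¹ = k⁻¹ * log k := by rw [negMulLog, log_inv]; ring
  rw [← Finset.smul_sum, ← Finset.smul_sum, smul_eq_mul, smul_eq_mul, negMulLog_mul, hηk]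
    at hjensen
  have hlog : log k ≤ log K := log_le_log hk (by simp only [k]; exact_mod_cast hK)
  have hP : 0 ≤ P := Finset.sum_nonneg hp
  calc ∑ i ∈ s, negMulLog (p i) = k * (k⁻¹ * ∑ i ∈ s, negMulLog (p i)) := by field_simp
    _ ≤ k * (P * (k⁻¹ * log k) + k⁻¹ * negMulLog P) := by gcongr
    _ = negMulLog P + P * log k := by field_simp; ring
    _ ≤ negMulLog P + P * log K := by gcongr

lemma negMulLog_toReal_div_log_two_nonneg {p : ℝ≥0∞} (hp : p ≤ 1) :
    0 ≤ Real.negMulLog p.toReal / Real.log 2 :=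
  div_nonneg (Real.negMulLog_nonneg ENNReal.toReal_nonneg (ENNReal.toReal_le_of_le_ofReal
    zero_le_one (by simpa using hp))) (Real.log_nonneg one_le_two)

lemma sum_entropyTerm_le {β : Type*} [MeasurableSpace β] [MeasurableSingletonClass β]
    (m : Measure β) [IsProbabilityMeasure m] (s : Finset β) {K : ℕ} (hK : s.card ≤ K) :
    ∑ b ∈ s, entropyTerm (m {b}) ≤
      entropyTerm (m s) + m s * ENNReal.ofReal (Real.logb 2 K) := by
  have hms : (m s).toReal = ∑ b ∈ s, (m {b}).toReal := by
    rw [← sum_measure_singleton, ENNReal.toReal_sum fun b _ => measure_ne_top m {b}]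
  have hreal := Real.sum_negMulLog_le s (fun b _ => (m {b}).toReal_nonneg) hK
  rw [← hms] at hreal
  calc ∑ b ∈ s, entropyTerm (m {b})
      = ENNReal.ofReal (∑ b ∈ s, Real.negMulLog (m {b}).toReal / Real.log 2) :=
        (ENNReal.ofReal_sum_of_nonneg fun b _ =>
          negMulLog_toReal_div_log_two_nonneg prob_le_one).symm
    _ ≤ ENNReal.ofReal (Real.negMulLog (m s).toReal / Real.log 2 +
          (m s).toReal * Real.logb 2 K) := by
        gcongr
        rw [← Finset.sum_div, Real.logb, mul_div_assoc', ← add_div]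
        gcongr
    _ ≤ entropyTerm (m s) + m s * ENNReal.ofReal (Real.logb 2 K) := by
        refine ENNReal.ofReal_add_le.trans (add_le_add le_rfl ?_)
        rw [ENNReal.ofReal_mul ENNReal.toReal_nonneg, ENNReal.ofReal_toReal (measure_ne_top m s)]

lemma tsum_entropyTerm_le_of_inter_subset {β : Type*} [MeasurableSpace β]
    [MeasurableSingletonClass β] (m : Measure β) [IsProbabilityMeasure m] {S A : Set β}
    (hS : m Sᶜ = 0) {s : Finset β} (hAs : A ∩ S ⊆ s) {K : ℕ} (hK : s.card ≤ K) :
    ∑' b : A, entropyTerm (m {(b : β)}) ≤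
      entropyTerm (m A) + m A * ENNReal.ofReal (Real.logb 2 K) := by
  classical
  set s' := s.filter (· ∈ A)
  have hs'A : (s' : Set β) ⊆ A := fun b hb => (Finset.mem_filter.1 hb).2
  have hAs' : A ∩ S ⊆ s' := fun b hb => Finset.mem_filter.2 ⟨hAs hb, hb.1⟩
  have hmass : m A = m s' :=
    le_antisymm (by rw [← measure_inter_conull hS]; exact measure_mono hAs') (measure_mono hs'A)
  have hvanish : ∀ b ∉ s', A.indicator (fun b => entropyTerm (m {b})) b = 0 := by
    intro b hb
    by_cases hbA : b ∈ A
    · have hbS : b ∉ S := fun hbS => hb (hAs' ⟨hbA, hbS⟩)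
      rw [indicator_of_mem hbA, measure_mono_null (singleton_subset_iff.2 hbS) hS,
        entropyTerm_zero]
    · exact indicator_of_notMem hbA _
  calc ∑' b : A, entropyTerm (m {(b : β)}) = ∑ b ∈ s', entropyTerm (m {b}) := by
        rw [tsum_subtype A fun b => entropyTerm (m {b}), tsum_eq_sum hvanish]
        exact Finset.sum_congr rfl fun b hb => indicator_of_mem (hs'A hb) _
    _ ≤ entropyTerm (m s') + m s' * ENNReal.ofReal (Real.logb 2 K) :=
        sum_entropyTerm_le m s' ((Finset.card_filter_le _ _).trans hK)
    _ = entropyTerm (m A) + m A * ENNReal.ofReal (Real.logb 2 K) := by rw [hmass]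

lemma pmfEntropy_le_pmfEntropy_map_add {β β' : Type*} [MeasurableSpace β]
    [MeasurableSingletonClass β] [MeasurableSpace β'] [MeasurableSingletonClass β']
    (m : Measure β) [IsProbabilityMeasure m] {f : β → β'} (hf : Measurable f) {S : Set β}
    (hS : m Sᶜ = 0) {K : ℕ} (hfib : ∀ t, ∃ s : Finset β, f ⁻¹' {t} ∩ S ⊆ s ∧ s.card ≤ K) :
    pmfEntropy m ≤ pmfEntropy (m.map f) + ENNReal.ofReal (Real.logb 2 K) := by
  set L := ENNReal.ofReal (Real.logb 2 K)
  have hfiber (t : β') : ∑' b : f ⁻¹' {t}, entropyTerm (m {(b : β)}) ≤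
      entropyTerm (m.map f {t}) + m.map f {t} * L := by
    obtain ⟨s, hs, hsK⟩ := hfib t
    rw [Measure.map_apply hf (measurableSet_singleton t)]
    exact tsum_entropyTerm_le_of_inter_subset m hS hs hsK
  have hmass_le_one : ∑' t, m.map f {t} ≤ 1 :=
    (tsum_meas_le_meas_iUnion_of_disjoint _ measurableSet_singleton
      fun _ _ h => disjoint_singleton.2 h).trans prob_le_one
  calc pmfEntropy m = ∑' t, ∑' b : f ⁻¹' {t}, entropyTerm (m {(b : β)}) := by
        rw [pmfEntropy_eq_tsum_entropyTerm, ENNReal.tsum_fiberwise (fun b => entropyTerm (m {b})) f]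
    _ ≤ ∑' t, (entropyTerm (m.map f {t}) + m.map f {t} * L) := ENNReal.tsum_le_tsum hfiber
    _ = pmfEntropy (m.map f) + (∑' t, m.map f {t}) * L := by
        rw [ENNReal.tsum_add, ENNReal.tsum_mul_right, pmfEntropy_eq_tsum_entropyTerm]
    _ ≤ pmfEntropy (m.map f) + L := by
        gcongr
        exact mul_le_of_le_one_left' hmass_le_one

lemma lintegral_entropyTerm_le {γ : Type*} [MeasurableSpace γ] (ρ : Measure γ)
    [IsProbabilityMeasure ρ] {q : γ → ℝ≥0∞} (hq : Measurable q) (hq1 : ∀ y, q y ≤ 1) :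
    ∫⁻ y, entropyTerm (q y) ∂ρ ≤ entropyTerm (∫⁻ y, q y ∂ρ) := by
  set r : γ → ℝ := fun y => (q y).toReal
  have hr : Measurable r := hq.ennreal_toReal
  have hr1 : ∀ y, r y ≤ 1 := fun y =>
    ENNReal.toReal_le_of_le_ofReal zero_le_one (by simpa using hq1 y)
  have hr_int : Integrable r ρ := Integrable.of_bound hr.aestronglyMeasurable 1
    (ae_of_all _ fun y => by
      rw [Real.norm_eq_abs, abs_of_nonneg ENNReal.toReal_nonneg]; exact hr1 y)
  have hη_int : Integrable (fun y => Real.negMulLog (r y)) ρ :=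
    Integrable.of_bound (Real.continuous_negMulLog.measurable.comp hr).aestronglyMeasurable 1
      (ae_of_all _ fun y => by
        rw [Real.norm_eq_abs, abs_of_nonneg (Real.negMulLog_nonneg ENNReal.toReal_nonneg (hr1 y))]
        linarith [Real.negMulLog_le_one_sub_self (ENNReal.toReal_nonneg (a := q y)),
          ENNReal.toReal_nonneg (a := q y)])
  have hjensen : ∫ y, Real.negMulLog (r y) ∂ρ ≤ Real.negMulLog (∫ y, r y ∂ρ) :=
    Real.concaveOn_negMulLog.le_map_integral Real.continuous_negMulLog.continuousOn isClosed_Ici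
      (ae_of_all _ fun _ => ENNReal.toReal_nonneg) hr_int hη_int
  have hmean : ∫ y, r y ∂ρ = (∫⁻ y, q y ∂ρ).toReal :=
    integral_toReal hq.aemeasurable (ae_of_all _ fun y => (hq1 y).trans_lt ENNReal.one_lt_top)
  calc ∫⁻ y, entropyTerm (q y) ∂ρ
      = ENNReal.ofReal (∫ y, Real.negMulLog (r y) / Real.log 2 ∂ρ) :=
        (ofReal_integral_eq_lintegral_ofReal (hη_int.div_const _)
          (ae_of_all _ fun y => negMulLog_toReal_div_log_two_nonneg (hq1 y))).symm
    _ ≤ entropyTerm (∫⁻ y, q y ∂ρ) := by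
        rw [entropyTerm, integral_div, ← hmean]
        gcongr

section Kernel

variable {γ β : Type*} [MeasurableSpace γ] [MeasurableSpace β] [MeasurableSingletonClass β]
  {S : Set β}

lemma measurable_pmfEntropy_kernel (κ : Kernel γ β) (hS : S.Countable)
    (hκS : ∀ y, κ y Sᶜ = 0) : Measurable fun y => pmfEntropy (κ y) := by
  have : Countable S := hS.to_subtype
  simp only [pmfEntropy_eq_tsum_subtype (hκS _)]
  exact Measurable.tsum fun b => (κ.measurable_coe (measurableSet_singleton _)).entropyTerm

lemma lintegral_pmfEntropy_le_pmfEntropy_comp (ρ : Measure γ) [IsProbabilityMeasure ρ]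
    (κ : Kernel γ β) [IsMarkovKernel κ] (hS : S.Countable) (hκS : ∀ y, κ y Sᶜ = 0) :
    ∫⁻ y, pmfEntropy (κ y) ∂ρ ≤ pmfEntropy (κ ∘ₘ ρ) := by
  have : Countable S := hS.to_subtype
  have hcomp : (κ ∘ₘ ρ) Sᶜ = 0 := by
    rw [Measure.bind_apply hS.measurableSet.compl κ.aemeasurable]
    simp [hκS]
  calc ∫⁻ y, pmfEntropy (κ y) ∂ρ = ∫⁻ y, ∑' b : S, entropyTerm (κ y {(b : β)}) ∂ρ :=
        lintegral_congr fun y => pmfEntropy_eq_tsum_subtype (hκS y)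
    _ = ∑' b : S, ∫⁻ y, entropyTerm (κ y {(b : β)}) ∂ρ := lintegral_tsum fun b =>
        (κ.measurable_coe (measurableSet_singleton _)).entropyTerm.aemeasurable
    _ ≤ ∑' b : S, entropyTerm ((κ ∘ₘ ρ) {(b : β)}) := ENNReal.tsum_le_tsum fun b => by
        rw [Measure.bind_apply (measurableSet_singleton _) κ.aemeasurable]
        exact lintegral_entropyTerm_le ρ (κ.measurable_coe (measurableSet_singleton _))
          fun y => prob_le_one
    _ = pmfEntropy (κ ∘ₘ ρ) := (pmfEntropy_eq_tsum_subtype hcomp).symm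

end Kernel

section Quantization

variable {ι : Type*}

lemma measurable_quant [Countable ι] (n : ℕ) : Measurable (quant (ι := ι) n) := by
  unfold quant
  fun_prop

lemma floor_two_pow_mul_eq_ediv (x : ℝ) {m n : ℕ} (h : m ≤ n) :
    ⌊(2 : ℝ) ^ m * x⌋ = ⌊(2 : ℝ) ^ n * x⌋ / 2 ^ (n - m) := by
  have hx : (2 : ℝ) ^ m * x = (2 ^ n * x) / ((2 ^ (n - m) : ℕ) : ℝ) := by
    rw [eq_div_iff (by positivity), Nat.cast_pow, Nat.cast_ofNat, mul_right_comm, ← pow_add,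
      Nat.add_sub_cancel' h]
  rw [hx, Int.floor_div_natCast, Nat.cast_pow, Nat.cast_ofNat]

lemma floor_two_pow_mul_quant (n : ℕ) (x : ι → ℝ) (i : ι) :
    ⌊(2 : ℝ) ^ n * quant n x i⌋ = ⌊(2 : ℝ) ^ n * x i⌋ := by
  rw [quant, mul_div_cancel₀ _ (by positivity), Int.floor_intCast]

lemma quant_comp_quant {m n : ℕ} (h : m ≤ n) : quant m ∘ quant n = quant (ι := ι) m := by
  funext x i
  simp only [Function.comp_apply, quant]
  rw [floor_two_pow_mul_eq_ediv _ h, ← quant, floor_two_pow_mul_quant,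
    ← floor_two_pow_mul_eq_ediv _ h]

lemma countable_range_quant [Finite ι] (n : ℕ) : (range (quant (ι := ι) n)).Countable :=
  (countable_univ_pi fun _ => countable_range fun k : ℤ => (k : ℝ) / 2 ^ n).mono
    (by rintro _ ⟨x, rfl⟩ i -; exact ⟨_, rfl⟩)

lemma map_quant_compl_range [Fintype ι] (ν : Measure (ι → ℝ)) (n : ℕ) :
    ν.map (quant n) (range (quant n))ᶜ = 0 := by
  rw [Measure.map_apply (measurable_quant n) (countable_range_quant n).measurableSet.compl]
  simp

/-- A level-`m` cell contains `2 ^ (n - m)` level-`n` grid points along each axis. -/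
lemma exists_finset_range_quant_inter_preimage_subset [Fintype ι] {m n : ℕ} (h : m ≤ n)
    (t : ι → ℝ) : ∃ s : Finset (ι → ℝ), quant m ⁻¹' {t} ∩ range (quant n) ⊆ s ∧
      s.card ≤ 2 ^ ((n - m) * Fintype.card ι) := by
  classical
  set c : ℕ := 2 ^ (n - m)
  have hc : (0 : ℤ) < c := by positivity
  refine ⟨Finset.univ.image fun (k : ι → Fin c) i => t i + (k i : ℝ) / 2 ^ n, ?_, ?_⟩
  · rintro _ ⟨ht, ⟨x, rfl⟩⟩
    rw [mem_preimage, mem_singleton_iff, ← Function.comp_apply (f := quant m),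
      quant_comp_quant h] at ht
    subst ht
    set j : ι → ℤ := fun i => ⌊(2 : ℝ) ^ n * x i⌋
    refine Finset.mem_image.2 ⟨fun i => ⟨(j i % c).toNat, ?_⟩, Finset.mem_univ _, ?_⟩
    · have := Int.emod_lt_of_pos (j i) hc
      have := Int.emod_nonneg (j i) hc.ne'
      omega
    · funext i
      simp only [quant]
      have hk : (((j i % c).toNat : ℕ) : ℝ) = ((j i % c : ℤ) : ℝ) := by
        exact_mod_cast Int.toNat_of_nonneg (Int.emod_nonneg _ hc.ne')
      have hj : ((c * (j i / c) + j i % c : ℤ) : ℝ) = j i := by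
        exact_mod_cast Int.mul_ediv_add_emod (j i) c
      have hpow : (2 : ℝ) ^ n = 2 ^ m * c := by
        rw [Nat.cast_pow, Nat.cast_ofNat, ← pow_add, Nat.add_sub_cancel' h]
      have hcZ : (2 : ℤ) ^ (n - m) = c := by push_cast [c]; rfl
      rw [floor_two_pow_mul_eq_ediv _ h, hcZ]
      change ((j i / c : ℤ) : ℝ) / 2 ^ m + _ = (j i : ℝ) / 2 ^ n
      rw [hk, ← hj, hpow]
      have hc' : (c : ℝ) ≠ 0 := by positivity
      push_cast
      field_simp
  · calc (Finset.univ.image fun (k : ι → Fin c) i => t i + (k i : ℝ) / 2 ^ n).card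
        ≤ Fintype.card (ι → Fin c) := Finset.card_image_le
      _ = 2 ^ ((n - m) * Fintype.card ι) := by
        rw [Fintype.card_fun, Fintype.card_fin, ← pow_mul]

end Quantization

section QuantizedEntropy

variable {ι : Type*} [Fintype ι]

lemma entQM_le_entQM_add (ν : Measure (ι → ℝ)) [IsProbabilityMeasure ν] {m n : ℕ}
    (h : m ≤ n) : entQM ν n ≤ entQM ν m + (n - m : ℕ) * Fintype.card ι := by
  have := Measure.isProbabilityMeasure_map (μ := ν) (measurable_quant n).aemeasurable
  have := pmfEntropy_le_pmfEntropy_map_add (ν.map (quant n)) (measurable_quant m)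
    (map_quant_compl_range ν n) (exists_finset_range_quant_inter_preimage_subset h)
  rwa [Measure.map_map (measurable_quant m) (measurable_quant n), quant_comp_quant h,
    Nat.cast_pow, Nat.cast_ofNat, Real.logb_pow, Real.logb_self_eq_one one_lt_two, mul_one,
    ENNReal.ofReal_natCast, Nat.cast_mul] at this

lemma measurable_entQM {γ : Type*} [MeasurableSpace γ] (κ : Kernel γ (ι → ℝ)) (n : ℕ) :
    Measurable fun y => entQM (κ y) n := by
  simpa only [entQM, Kernel.map_apply κ (measurable_quant n)] using
    measurable_pmfEntropy_kernel (κ.map (quant n)) (countable_range_quant n)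
      fun y => by rw [Kernel.map_apply κ (measurable_quant n)]; exact map_quant_compl_range _ n

lemma lintegral_entQM_le_entQM_comp {γ : Type*} [MeasurableSpace γ] (ρ : Measure γ)
    [IsProbabilityMeasure ρ] (κ : Kernel γ (ι → ℝ)) [IsMarkovKernel κ] (n : ℕ) :
    ∫⁻ y, entQM (κ y) n ∂ρ ≤ entQM (κ ∘ₘ ρ) n := by
  have := Kernel.IsMarkovKernel.map κ (measurable_quant (ι := ι) n)
  simpa only [entQM, Kernel.map_apply κ (measurable_quant n),
    Measure.map_comp _ _ (measurable_quant n)] using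
    lintegral_pmfEntropy_le_pmfEntropy_comp ρ (κ.map (quant n)) (countable_range_quant n)
      fun y => by rw [Kernel.map_apply κ (measurable_quant n)]; exact map_quant_compl_range _ n

variable {α γ : Type*} [MeasurableSpace α] [MeasurableSpace γ] {X : α → ι → ℝ}

lemma entQ_eq_entQM_map (μ : Measure α) (hX : Measurable X) (n : ℕ) :
    entQ μ X n = entQM (μ.map X) n := by
  rw [entQ, entQM, Measure.map_map (measurable_quant n) hX]
  rfl

lemma condEntQ_eq_lintegral_entQM (μ : Measure α) [IsFiniteMeasure μ] (hX : Measurable X)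
    (Y : α → γ) (n : ℕ) :
    condEntQ μ X Y n = ∫⁻ y, entQM (condDistrib X Y μ y) n ∂(μ.map Y) := by
  refine lintegral_congr_ae ((condDistrib_comp Y hX.aemeasurable (measurable_quant n)).mono
    fun y hy => ?_)
  change pmfEntropy (condDistrib (quant n ∘ X) Y μ y) =
    pmfEntropy ((condDistrib X Y μ y).map (quant n))
  rw [hy, Kernel.map_apply _ (measurable_quant n)]

lemma condEntQ_le_entQ (μ : Measure α) [IsProbabilityMeasure μ] (hX : Measurable X)
    {Y : α → γ} (hY : Measurable Y) (n : ℕ) : condEntQ μ X Y n ≤ entQ μ X n := by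
  have := Measure.isProbabilityMeasure_map (μ := μ) hY.aemeasurable
  rw [condEntQ_eq_lintegral_entQM μ hX, entQ_eq_entQM_map μ hX,
    ← condDistrib_comp_map hY.aemeasurable hX.aemeasurable]
  exact lintegral_entQM_le_entQM_comp _ _ n

end QuantizedEntropy

/-- For `n ≥ n₀`, `H n₀ + C` is an integrable majorant of `H n / n`. -/
lemma tendsto_toReal_lintegral_div_of_le_add {γ : Type*} [MeasurableSpace γ] {ρ : Measure γ}
    [IsFiniteMeasure ρ] {H : ℕ → γ → ℝ≥0∞} (hH : ∀ n, Measurable (H n)) {n₀ : ℕ} {C : ℝ≥0∞}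
    (hC : C ≠ ⊤) (hgrow : ∀ n, n₀ ≤ n → ∀ y, H n y ≤ H n₀ y + (n - n₀ : ℕ) * C)
    (hfin : ∫⁻ y, H n₀ y ∂ρ ≠ ⊤) {D : γ → ℝ}
    (hD : ∀ᵐ y ∂ρ, Tendsto (fun n : ℕ => (H n y).toReal / n) atTop (𝓝 (D y))) :
    Tendsto (fun n : ℕ => (∫⁻ y, H n y ∂ρ).toReal / n) atTop (𝓝 (∫ y, D y ∂ρ)) := by
  have hstep_ne_top : ∀ n : ℕ, ((n - n₀ : ℕ) : ℝ≥0∞) * C ≠ ⊤ :=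
    fun n => ENNReal.mul_ne_top (ENNReal.natCast_ne_top _) hC
  have hgrow_real : ∀ n, n₀ ≤ n → ∀ y, H n₀ y ≠ ⊤ →
      (H n y).toReal ≤ (H n₀ y).toReal + (n - n₀ : ℕ) * C.toReal := fun n hn y hy => by
    have := ENNReal.toReal_mono (ENNReal.add_ne_top.2 ⟨hy, hstep_ne_top n⟩) (hgrow n hn y)
    rwa [ENNReal.toReal_add hy (hstep_ne_top n), ENNReal.toReal_mul, ENNReal.toReal_natCast]
      at this
  have hfin₀ : ∀ᵐ y ∂ρ, H n₀ y ≠ ⊤ := (ae_lt_top (hH n₀) hfin).mono fun y hy => hy.ne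
  have hdom : ∀ᶠ n : ℕ in atTop, ∀ᵐ y ∂ρ, ‖(H n y).toReal / n‖ ≤ (H n₀ y).toReal + C.toReal := by
    filter_upwards [eventually_ge_atTop (max n₀ 1)] with n hn
    filter_upwards [hfin₀] with y hy
    have hn₀ : n₀ ≤ n := le_of_max_le_left hn
    have hn1 : (1 : ℝ) ≤ n := by exact_mod_cast le_of_max_le_right hn
    have hsub : ((n - n₀ : ℕ) : ℝ) ≤ n := by exact_mod_cast Nat.sub_le n n₀
    rw [Real.norm_of_nonneg (by positivity), div_le_iff₀ (by positivity)]
    nlinarith [hgrow_real n hn₀ y hy, (H n₀ y).toReal_nonneg, C.toReal_nonneg]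
  have hlim := tendsto_integral_filter_of_dominated_convergence _
    (Eventually.of_forall fun n => ((hH n).ennreal_toReal.div_const _).aestronglyMeasurable) hdom
    ((integrable_toReal_of_lintegral_ne_top (hH n₀).aemeasurable hfin).add (integrable_const _))
    hD
  refine hlim.congr' ?_
  filter_upwards [eventually_ge_atTop n₀] with n hn
  rw [integral_div, integral_toReal (hH n).aemeasurable]
  filter_upwards [hfin₀] with y hy
  exact (hgrow n hn y).trans_lt (ENNReal.add_lt_top.2 ⟨hy.lt_top, (hstep_ne_top n).lt_top⟩)

/-- **Relative information loss and information dimension.**  Let `X` be an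
`N`-dimensional RV with positive information dimension `d(X) = dX`.  If the
conditional information dimension `d(X|Y=y) = D y` exists and is finite for
`P_Y`-almost every `y`, then the relative information loss exists and equals
`l(X→Y) = d(X|Y)/d(X)`, where `d(X|Y) = ∫ d(X|Y=y) dP_Y(y)`. -/
theorem relLoss_eq_condInfoDim_div_infoDim
    {α ι γ : Type*} [MeasurableSpace α] [Fintype ι] [MeasurableSpace γ]
    (μ : Measure α) [IsProbabilityMeasure μ]
    (X : α → ι → ℝ) (g : (ι → ℝ) → γ)
    (hX : Measurable X) (hg : Measurable g)
    (dX : ℝ) (hdXpos : 0 < dX)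
    (hdX : Tendsto (fun n : ℕ => (entQ μ X n).toReal / n) atTop (𝓝 dX))
    (D : γ → ℝ)
    (hD : ∀ᵐ y ∂(μ.map fun a => g (X a)),
      Tendsto (fun n : ℕ =>
          (entQM (condDistrib X (fun a => g (X a)) μ y) n).toReal / n) atTop (𝓝 (D y))) :
    Tendsto (fun n : ℕ => relLossSeq μ X (fun a => g (X a)) n) atTop
      (𝓝 ((∫ y, D y ∂(μ.map fun a => g (X a))) / dX)) := by
  have hY : Measurable fun a => g (X a) := hg.comp hX
  obtain ⟨n₀, hn₀⟩ : ∃ n₀, entQ μ X n₀ ≠ ⊤ := by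
    obtain ⟨n₀, hn₀⟩ := (hdX.eventually (eventually_gt_nhds hdXpos)).exists
    exact ⟨n₀, fun h => by simp [h] at hn₀⟩
  have hcondEnt : Tendsto (fun n : ℕ => (condEntQ μ X (fun a => g (X a)) n).toReal / n) atTop
      (𝓝 (∫ y, D y ∂(μ.map fun a => g (X a)))) := by
    simp only [condEntQ_eq_lintegral_entQM μ hX]
    refine tendsto_toReal_lintegral_div_of_le_add (n₀ := n₀) (measurable_entQM _)
      (ENNReal.natCast_ne_top _) (fun n hn y => entQM_le_entQM_add _ hn) ?_ hD
    rw [← condEntQ_eq_lintegral_entQM μ hX]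
    exact ne_top_of_le_ne_top hn₀ (condEntQ_le_entQ μ hX hY n₀)
  refine (hcondEnt.div hdX hdXpos.ne').congr' ?_
  filter_upwards [eventually_ne_atTop 0] with n hn
  exact div_div_div_cancel_right₀ (Nat.cast_ne_zero.2 hn) _ _
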